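/- Suppose Σ and Σ' are両 both HOSVD core tensors of the same tensor Ψ, i.e., Ψ = (⊗ₙ U⁽ⁿ⁾)Σ = (⊗ₙ V⁽ⁿ⁾)Σ' with all U⁽ⁿ⁾, V⁽ⁿ⁾ unitary and both Σ, Σ' all-orthogonal with ordered mode-n singular values. Then for every n and every i, ‖Σ_{i_n=i}‖ = ‖Σ'_{i_n=i}‖; that is, the mode-n singular values σᵢ⁽ⁿ⁾ of Ψ are uniquely determined. -/

import Mathlib

open Matrix BigOperators

noncomputable section

/-- The full Kronecker (tensor) product `⊗ₙ U⁽ⁿ⁾` of the local matrices, as a matrix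
on the product index set. -/
def kronFull {N : ℕ} {I : Fin N → ℕ} (U : ∀ n, Matrix (Fin (I n)) (Fin (I n)) ℂ) :
    Matrix (∀ n, Fin (I n)) (∀ n, Fin (I n)) ℂ :=
  Matrix.of fun x y => ∏ n, U n (x n) (y n)

/-- The action of a local operator `⊗ₙ U⁽ⁿ⁾` on a tensor `T ∈ ℂ^{I₁}⊗⋯⊗ℂ^{I_N}`. -/
def locAct {N : ℕ} {I : Fin N → ℕ} (U : ∀ n, Matrix (Fin (I n)) (Fin (I n)) ℂ)
    (T : (∀ n, Fin (I n)) → ℂ) : (∀ n, Fin (I n)) → ℂ :=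
  fun x => ∑ y : ∀ n, Fin (I n), (∏ n, U n (x n) (y n)) * T y

/-- Assemble a full multi-index from the value `i` of the `n`-th index and the values
`c` of the remaining indices. -/
def assemble {N : ℕ} {I : Fin N → ℕ} (n : Fin N) (i : Fin (I n))
    (c : ∀ k : {k : Fin N // k ≠ n}, Fin (I k.1)) : ∀ m, Fin (I m) :=
  fun m => if h : m = n then cast (show Fin (I n) = Fin (I m) by rw [h]) i else c ⟨m, h⟩

/-- The mode-`n` matrix unfolding of a tensor (columns indexed by the remaining indices). -/
def unfold {N : ℕ} {I : Fin N → ℕ} (n : Fin N) (T : (∀ m, Fin (I m)) → ℂ) :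
    Matrix (Fin (I n)) (∀ k : {k : Fin N // k ≠ n}, Fin (I k.1)) ℂ :=
  Matrix.of fun i c => T (assemble n i c)

/-- The Hermitian inner product `⟨T_{i_n=i}, T'_{i_n=j}⟩` of mode-`n` slices. -/
def modeInner {N : ℕ} {I : Fin N → ℕ} (n : Fin N) (T T' : (∀ m, Fin (I m)) → ℂ)
    (i j : Fin (I n)) : ℂ :=
  ∑ c : ∀ k : {k : Fin N // k ≠ n}, Fin (I k.1),
    star (T (assemble n i c)) * T' (assemble n j c)

/-- `T` is all-orthogonal with ordered mode-`n` singular values `σ n`. -/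
def AllOrth {N : ℕ} {I : Fin N → ℕ} (σ : ∀ n, Fin (I n) → ℝ)
    (T : (∀ m, Fin (I m)) → ℂ) : Prop :=
  (∀ n, Antitone (σ n)) ∧ (∀ n i, 0 ≤ σ n i) ∧
    ∀ n i j, modeInner n T T i j = if i = j then ((σ n i : ℂ)) ^ 2 else 0

/-- Squared Frobenius norm of a tensor. -/
def fnormSq {N : ℕ} {I : Fin N → ℕ} (T : (∀ m, Fin (I m)) → ℂ) : ℝ :=
  ∑ x, Complex.normSq (T x)

/-!
Unfold `Ψ = (⊗ₘ U⁽ᵐ⁾) Σ` along mode `n`: the unfolding is `U⁽ⁿ⁾ Σ₍ₙ₎ Wᵀ`, where `W` is the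
Kronecker product of the remaining `U⁽ᵐ⁾` and hence unitary. So the Gram matrix `Ψ₍ₙ₎ Ψ₍ₙ₎ᴴ`
equals `U⁽ⁿ⁾ Σ₍ₙ₎ Σ₍ₙ₎ᴴ U⁽ⁿ⁾ᴴ`, and all-orthogonality makes `Σ₍ₙ₎ Σ₍ₙ₎ᴴ = diag (σ⁽ⁿ⁾)²`. The
squares `(σᵢ⁽ⁿ⁾)²` are therefore the roots of the characteristic polynomial of a matrix that
depends on `Ψ` alone; being ordered and nonnegative, the `σᵢ⁽ⁿ⁾` are determined by them.
-/

namespace Matrix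

section piKron

variable {κ R : Type*} [Fintype κ] {ι : κ → Type*}

def piKron [CommSemiring R] (A : ∀ k, Matrix (ι k) (ι k) R) : Matrix (∀ k, ι k) (∀ k, ι k) R :=
  of fun x y => ∏ k, A k (x k) (y k)

theorem piKron_apply [CommSemiring R] (A : ∀ k, Matrix (ι k) (ι k) R) (x y : ∀ k, ι k) :
    piKron A x y = ∏ k, A k (x k) (y k) := rfl

theorem piKron_mul [DecidableEq κ] [∀ k, Fintype (ι k)] [CommSemiring R]
    (A B : ∀ k, Matrix (ι k) (ι k) R) : piKron A * piKron B = piKron (A * B) := by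
  ext x z
  simp only [mul_apply, piKron_apply, Pi.mul_apply, ← Finset.prod_mul_distrib,
    Finset.prod_univ_sum, Fintype.piFinset_univ]

theorem piKron_one [∀ k, DecidableEq (ι k)] [CommSemiring R] :
    piKron (1 : ∀ k, Matrix (ι k) (ι k) R) = 1 := by
  ext x y
  simp only [piKron_apply, Pi.one_apply, one_apply, Finset.prod_ite_zero, Finset.prod_const_one,
    Finset.mem_univ, forall_const, funext_iff]

theorem conjTranspose_piKron [CommSemiring R] [StarRing R] (A : ∀ k, Matrix (ι k) (ι k) R) :
    (piKron A)ᴴ = piKron fun k => (A k)ᴴ := by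
  ext x y
  simp [piKron_apply, star_prod]

theorem piKron_mem_unitaryGroup [DecidableEq κ] [∀ k, Fintype (ι k)] [∀ k, DecidableEq (ι k)]
    [CommRing R] [StarRing R] {A : ∀ k, Matrix (ι k) (ι k) R}
    (hA : ∀ k, A k ∈ unitaryGroup (ι k) R) : piKron A ∈ unitaryGroup (∀ k, ι k) R := by
  rw [mem_unitaryGroup_iff', star_eq_conjTranspose, conjTranspose_piKron, piKron_mul]
  convert piKron_one (R := R) (ι := ι)
  ext1 k
  exact mem_unitaryGroup_iff'.mp (hA k)

end piKron

theorem charpoly_conj_of_mem_unitaryGroup {n R : Type*} [Fintype n] [DecidableEq n] [CommRing R]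
    [StarRing R] {W : Matrix n n R} (hW : W ∈ unitaryGroup n R) (A : Matrix n n R) :
    (W * A * Wᴴ).charpoly = A.charpoly := by
  rw [Matrix.mul_assoc, charpoly_mul_comm, Matrix.mul_assoc, ← star_eq_conjTranspose,
    mem_unitaryGroup_iff'.mp hW, Matrix.mul_one]

theorem roots_charpoly_diagonal {n R : Type*} [Fintype n] [DecidableEq n] [CommRing R] [IsDomain R]
    (d : n → R) : (diagonal d).charpoly.roots = Finset.univ.val.map d := by
  rw [charpoly_diagonal, Finset.prod_eq_multiset_prod,
    ← Polynomial.roots_multiset_prod_X_sub_C (Finset.univ.val.map d), Multiset.map_map]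
  rfl

end Matrix

theorem Fin.eq_of_antitone_of_map_univ_eq {α : Type*} [LinearOrder α] {m : ℕ} {f g : Fin m → α}
    (hf : Antitone f) (hg : Antitone g)
    (h : Finset.univ.val.map f = Finset.univ.val.map g) : f = g := by
  rw [Fin.univ_val_map, Fin.univ_val_map, Multiset.coe_eq_coe] at h
  exact List.ofFn_injective (h.eq_of_sortedGE hf.sortedGE_ofFn hg.sortedGE_ofFn)

section ModeUnfolding

variable {N : ℕ} {I : Fin N → ℕ}

theorem assemble_self (n : Fin N) (i : Fin (I n)) (c : ∀ k : {k : Fin N // k ≠ n}, Fin (I k.1)) :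
    assemble n i c n = i := by
  simp [assemble]

theorem assemble_of_ne (n : Fin N) (i : Fin (I n)) (c : ∀ k : {k : Fin N // k ≠ n}, Fin (I k.1))
    (k : {k : Fin N // k ≠ n}) : assemble n i c k = c k := by
  simp [assemble, k.2]

theorem assemble_eq_piSplitAt_symm (n : Fin N) (i : Fin (I n))
    (c : ∀ k : {k : Fin N // k ≠ n}, Fin (I k.1)) :
    assemble n i c = (Equiv.piSplitAt n fun m => Fin (I m)).symm (i, c) := by
  funext m
  by_cases h : m = n
  · subst h; simp [assemble]
  · simp [assemble, h]

theorem unfold_locAct (n : Fin N) (U : ∀ k, Matrix (Fin (I k)) (Fin (I k)) ℂ)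
    (T : (∀ m, Fin (I m)) → ℂ) :
    unfold n (locAct U T) = U n * unfold n T * (piKron fun k : {k // k ≠ n} => U k)ᵀ := by
  ext i c
  rw [unfold, of_apply, locAct, ← (Equiv.piSplitAt n _).symm.sum_comp, Fintype.sum_prod_type,
    Finset.sum_comm]
  simp only [mul_apply, transpose_apply, piKron_apply, unfold, of_apply, Finset.sum_mul,
    ← assemble_eq_piSplitAt_symm]
  refine Finset.sum_congr rfl fun d _ => Finset.sum_congr rfl fun p _ => ?_
  simp only [Fintype.prod_eq_mul_prod_subtype_ne _ n, assemble_self, assemble_of_ne]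
  ring

theorem unfold_locAct_mul_conjTranspose {U : ∀ k, Matrix (Fin (I k)) (Fin (I k)) ℂ}
    (hU : ∀ k, U k ∈ unitaryGroup (Fin (I k)) ℂ) (n : Fin N) (T : (∀ m, Fin (I m)) → ℂ) :
    unfold n (locAct U T) * (unfold n (locAct U T))ᴴ
      = U n * (unfold n T * (unfold n T)ᴴ) * (U n)ᴴ := by
  set W := (piKron fun k : {k // k ≠ n} => U k)ᵀ
  have hW : W * Wᴴ = 1 := mem_unitaryGroup_iff.mp <|
    transpose_mem_unitaryGroup_iff.mpr (piKron_mem_unitaryGroup fun k => hU k)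
  rw [unfold_locAct, conjTranspose_mul, conjTranspose_mul]
  simp only [Matrix.mul_assoc]
  rw [← Matrix.mul_assoc W, hW, Matrix.one_mul]

namespace AllOrth

variable {σ : ∀ n, Fin (I n) → ℝ} {T : (∀ m, Fin (I m)) → ℂ}

theorem unfold_mul_conjTranspose (h : AllOrth σ T) (n : Fin N) :
    unfold n T * (unfold n T)ᴴ = diagonal fun p => ((σ n p ^ 2 : ℝ) : ℂ) := by
  ext p q
  have hentry : (unfold n T * (unfold n T)ᴴ) p q = modeInner n T T q p := by
    rw [mul_apply, modeInner]
    exact Finset.sum_congr rfl fun c _ => mul_comm _ _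
  rw [hentry, h.2.2, diagonal_apply]
  by_cases hpq : p = q
  · simp [hpq]
  · rw [if_neg (Ne.symm hpq), if_neg hpq]

theorem antitone_sq (h : AllOrth σ T) (n : Fin N) : Antitone fun p => σ n p ^ 2 :=
  fun _ b hab => pow_le_pow_left₀ (h.2.1 n b) (h.1 n hab) 2

end AllOrth

theorem roots_charpoly_unfold_locAct_mul_conjTranspose {U : ∀ k, Matrix (Fin (I k)) (Fin (I k)) ℂ}
    (hU : ∀ k, U k ∈ unitaryGroup (Fin (I k)) ℂ) {σ : ∀ n, Fin (I n) → ℝ}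
    {T : (∀ m, Fin (I m)) → ℂ} (h : AllOrth σ T) (n : Fin N) :
    (unfold n (locAct U T) * (unfold n (locAct U T))ᴴ).charpoly.roots
      = (Finset.univ.val.map fun p => σ n p ^ 2).map ((↑) : ℝ → ℂ) := by
  rw [unfold_locAct_mul_conjTranspose hU, h.unfold_mul_conjTranspose,
    charpoly_conj_of_mem_unitaryGroup (hU n), roots_charpoly_diagonal, Multiset.map_map]
  rfl

end ModeUnfolding

/-- If `Σ` and `Σ'` are both HOSVD core tensors of the same tensor `Ψ`, then
their mode-`n` singular values coincide: the `σᵢ⁽ⁿ⁾` of `Ψ` are uniquely determined. -/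
theorem stmt7 {N : ℕ} {I : Fin N → ℕ} (Ψ T T' : (∀ n, Fin (I n)) → ℂ)
    (U V : ∀ n, Matrix (Fin (I n)) (Fin (I n)) ℂ)
    (hU : ∀ n, U n ∈ Matrix.unitaryGroup (Fin (I n)) ℂ)
    (hV : ∀ n, V n ∈ Matrix.unitaryGroup (Fin (I n)) ℂ)
    (hT : Ψ = locAct U T) (hT' : Ψ = locAct V T')
    (σ σ' : ∀ n, Fin (I n) → ℝ)
    (hσ : AllOrth σ T) (hσ' : AllOrth σ' T') :
    ∀ (n : Fin N) (i : Fin (I n)), σ n i = σ' n i := by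
  intro n i
  have hroots := roots_charpoly_unfold_locAct_mul_conjTranspose hU hσ n
  rw [← hT, hT', roots_charpoly_unfold_locAct_mul_conjTranspose hV hσ' n] at hroots
  have hsq : (fun p => σ n p ^ 2) = fun p => σ' n p ^ 2 :=
    Fin.eq_of_antitone_of_map_univ_eq (hσ.antitone_sq n) (hσ'.antitone_sq n)
      (Multiset.map_injective Complex.ofReal_injective hroots).symm
  exact (sq_eq_sq₀ (hσ.2.1 n i) (hσ'.2.1 n i)).mp (congrFun hsq i)
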